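/- Strengthened Saks–Henstock Lemma (absolute version): under the hypotheses of the Saks–Henstock Lemma on a compact line, one has Σ_{k=1}^m | f(t_k)(G(b_k) − G(a_k)) + f(a_k)G(a_k) − ∫_{a_k}^{b_k} f dG | ≤ 4ε for every δ-fine tagged system of intervals, whenever δ is an ε-gauge for the G-integrable function f. -/

import Mathlib

open Set Filter MeasureTheory

/-- A tagged partition of the interval `[a,b]` in a linear order `K`. -/
structure TaggedPartition (K : Type*) [LinearOrder K] (a b : K) where
  n : ℕ
  x : ℕ → K
  t : ℕ → K
  x_zero : x 0 = a
  x_last : x n = b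
  mono : ∀ i < n, x i ≤ x (i + 1)
  tag_mem : ∀ i < n, t (i + 1) ∈ Set.Icc (x i) (x (i + 1))

/-- A gauge on the interval `[a,b]` of `K`: each point of `[a,b]` is assigned a
relatively open subinterval of `[a,b]` containing it. -/
def IsGauge (K : Type*) [LinearOrder K] [TopologicalSpace K] (a b : K) (δ : K → Set K) : Prop :=
  ∀ x ∈ Set.Icc a b, x ∈ δ x ∧ (δ x).OrdConnected ∧ ∃ U, IsOpen U ∧ δ x = U ∩ Set.Icc a b

/-- A tagged partition is `δ`-fine when `(x_{i-1}, x_i] ⊆ δ(t_i)` for all `i`. -/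
def TaggedPartition.IsFine {K : Type*} [LinearOrder K] {a b : K}
    (P : TaggedPartition K a b) (δ : K → Set K) : Prop :=
  ∀ i < P.n, Set.Ioc (P.x i) (P.x (i + 1)) ⊆ δ (P.t (i + 1))

/-- The Riemann sum `S(f,G,P) = f(a)G(a) + Σ f(t_i)(G(x_i) - G(x_{i-1}))`. -/
noncomputable def riemannSum {K : Type*} [LinearOrder K] {a b : K}
    (f G : K → ℝ) (P : TaggedPartition K a b) : ℝ :=
  f a * G a + ∑ i ∈ Finset.range P.n, f (P.t (i + 1)) * (G (P.x (i + 1)) - G (P.x i))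

/-- `f` has Kurzweil–Stieltjes integral `A` with respect to `G` over `[a,b]`. -/
def HasIntegral {K : Type*} [LinearOrder K] [TopologicalSpace K]
    (f G : K → ℝ) (a b : K) (A : ℝ) : Prop :=
  ∀ ε : ℝ, 0 < ε → ∃ δ : K → Set K, IsGauge K a b δ ∧
    ∀ P : TaggedPartition K a b, P.IsFine δ → |riemannSum f G P - A| < ε

/-- `G` is amenable: right-continuous everywhere, and regulated (left limits exist at
left-dense points, right limits at right-dense points). -/
def Amenable {K : Type*} [LinearOrder K] [TopologicalSpace K] [BoundedOrder K]
    (G : K → ℝ) : Prop :=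
  (∀ x : K, ContinuousWithinAt G (Set.Ici x) x) ∧
  (∀ x : K, x ≠ ⊥ → (¬ ∃ y, y ⋖ x) → ∃ l, Filter.Tendsto G (nhdsWithin x (Set.Iio x)) (nhds l)) ∧
  (∀ x : K, x ≠ ⊤ → (¬ ∃ y, x ⋖ y) → ∃ l, Filter.Tendsto G (nhdsWithin x (Set.Ioi x)) (nhds l))

open Classical in
/-- `L_G(x)`: `0` at the least element, `G` of the immediate predecessor if `x` is
left-isolated, and the left limit of `G` at `x` if `x` is left-dense. -/
noncomputable def Lfun {K : Type*} [LinearOrder K] [TopologicalSpace K] [BoundedOrder K]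
    (G : K → ℝ) (x : K) : ℝ :=
  if x = ⊥ then 0
  else if h : ∃ y, y ⋖ x then G h.choose
  else Function.leftLim G x

/-- The set of variation sums of `G` over divisions of `[a,b]`. -/
def varSums {K : Type*} [LinearOrder K] (G : K → ℝ) (a b : K) : Set ℝ :=
  {v | ∃ (n : ℕ) (x : ℕ → K), x 0 = a ∧ x n = b ∧ (∀ i < n, x i ≤ x (i + 1)) ∧
        v = ∑ i ∈ Finset.range n, |G (x (i + 1)) - G (x i)|}

/-- `S` is null for the outer measure induced by `μ` via covers by countably many
open intervals. -/
def GNull {K : Type*} [LinearOrder K] [TopologicalSpace K] [MeasurableSpace K]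
    (μ : MeasureTheory.Measure K) (S : Set K) : Prop :=
  ∀ ε : ℝ, 0 < ε → ∃ I : ℕ → Set K, (∀ n, IsOpen (I n) ∧ (I n).OrdConnected) ∧
    S ⊆ ⋃ n, I n ∧ ∑' n, μ (I n) < ENNReal.ofReal ε

/-!
Complete the tagged system to a fine tagged partition of the whole line in two ways: once with
the given tagged cells, once with fine partitions of each cell whose Riemann sums approximate the
integrals `ι k`, the gaps being filled identically (Cousin's lemma). Both Riemann sums lie within
`ε` of `A`, so the signed sum of the defects over any subsystem is at most `2ε`; applying this to
the subsystems of positive and of negative defects gives `4ε`.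
-/

namespace TaggedPartition

section Construction

variable {K : Type*}

/-- The sequence `u 0, …, u n, v 1, v 2, …`: `v 0` is dropped, which is harmless for the
division points (`u n = v 0`) and for the tags (`t 0` is never used). -/
def seqAppend (n : ℕ) (u v : ℕ → K) (i : ℕ) : K := if i ≤ n then u i else v (i - n)

lemma seqAppend_of_le {n : ℕ} {u v : ℕ → K} {i : ℕ} (h : i ≤ n) : seqAppend n u v i = u i :=
  if_pos h

lemma seqAppend_add_succ (n : ℕ) (u v : ℕ → K) (j : ℕ) :
    seqAppend n u v (n + (j + 1)) = v (j + 1) := by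
  simp [seqAppend]

lemma seqAppend_add {n : ℕ} {u v : ℕ → K} (h : u n = v 0) (j : ℕ) :
    seqAppend n u v (n + j) = v j := by
  cases j with
  | zero => simpa [seqAppend] using h
  | succ j => exact seqAppend_add_succ n u v j

variable {n n' : ℕ} {x t x' t' : ℕ → K}

lemma forall_cell_seqAppend (h : x n = x' 0) (Φ : K → K → K → Prop)
    (hΦ : ∀ i < n, Φ (x i) (x (i + 1)) (t (i + 1)))
    (hΦ' : ∀ i < n', Φ (x' i) (x' (i + 1)) (t' (i + 1))) :
    ∀ i < n + n', Φ (seqAppend n x x' i) (seqAppend n x x' (i + 1)) (seqAppend n t t' (i + 1)) := by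
  intro i hi
  rcases lt_or_ge i n with hin | hin
  · rw [seqAppend_of_le hin.le, seqAppend_of_le hin, seqAppend_of_le hin]
    exact hΦ i hin
  · obtain ⟨j, rfl⟩ := Nat.exists_eq_add_of_le hin
    rw [add_assoc, seqAppend_add h, seqAppend_add h, seqAppend_add_succ]
    exact hΦ' j (by omega)

lemma sum_cell_seqAppend (h : x n = x' 0) (F : K → K → K → ℝ) :
    ∑ i ∈ Finset.range (n + n'), F (seqAppend n x x' i) (seqAppend n x x' (i + 1))
        (seqAppend n t t' (i + 1)) =
      ∑ i ∈ Finset.range n, F (x i) (x (i + 1)) (t (i + 1)) +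
        ∑ i ∈ Finset.range n', F (x' i) (x' (i + 1)) (t' (i + 1)) := by
  rw [Finset.sum_range_add]
  congr 1
  · refine Finset.sum_congr rfl fun i hi => ?_
    have hin := Finset.mem_range.mp hi
    rw [seqAppend_of_le hin.le, seqAppend_of_le hin, seqAppend_of_le hin]
  · refine Finset.sum_congr rfl fun j _ => ?_
    rw [add_assoc, seqAppend_add h, seqAppend_add h, seqAppend_add_succ]

variable [LinearOrder K]

def append {a b c : K} (P : TaggedPartition K a b) (Q : TaggedPartition K b c) :
    TaggedPartition K a c where
  n := P.n + Q.n
  x := seqAppend P.n P.x Q.x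
  t := seqAppend P.n P.t Q.t
  x_zero := by rw [seqAppend_of_le (Nat.zero_le _), P.x_zero]
  x_last := by rw [seqAppend_add (P.x_last.trans Q.x_zero.symm), Q.x_last]
  mono := forall_cell_seqAppend (t := P.t) (t' := Q.t) (P.x_last.trans Q.x_zero.symm)
    (fun l r _ => l ≤ r) P.mono Q.mono
  tag_mem := forall_cell_seqAppend (P.x_last.trans Q.x_zero.symm) (fun l r τ => τ ∈ Icc l r)
    P.tag_mem Q.tag_mem

def single (a b τ : K) (ha : a ≤ τ) (hb : τ ≤ b) : TaggedPartition K a b where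
  n := 1
  x i := if i = 0 then a else b
  t _ := τ
  x_zero := rfl
  x_last := rfl
  mono i hi := by
    obtain rfl : i = 0 := by omega
    simpa using ha.trans hb
  tag_mem i hi := by
    obtain rfl : i = 0 := by omega
    simpa using ⟨ha, hb⟩

end Construction

variable {K : Type*} [LinearOrder K] {a b c : K}

lemma IsFine.mono {P : TaggedPartition K a b} {δ δ' : K → Set K} (hP : P.IsFine δ)
    (h : ∀ x, δ x ⊆ δ' x) : P.IsFine δ' :=
  fun i hi => (hP i hi).trans (h _)

lemma IsFine.append {P : TaggedPartition K a b} {Q : TaggedPartition K b c} {δ : K → Set K}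
    (hP : P.IsFine δ) (hQ : Q.IsFine δ) : (P.append Q).IsFine δ :=
  fun i hi => forall_cell_seqAppend (P.x_last.trans Q.x_zero.symm) (fun l r τ => Ioc l r ⊆ δ τ)
    hP hQ i hi

lemma isFine_single {τ : K} (ha : a ≤ τ) (hb : τ ≤ b) {δ : K → Set K} (h : Ioc a b ⊆ δ τ) :
    (single a b τ ha hb).IsFine δ := by
  intro i hi
  obtain rfl : i = 0 := by simpa [single] using hi
  simpa [single] using h

lemma riemannSum_append (f G : K → ℝ) (P : TaggedPartition K a b) (Q : TaggedPartition K b c) :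
    riemannSum f G (P.append Q) = riemannSum f G P + riemannSum f G Q - f b * G b := by
  have h := sum_cell_seqAppend (n' := Q.n) (t := P.t) (t' := Q.t)
    (P.x_last.trans Q.x_zero.symm) (fun l r τ => f τ * (G r - G l))
  simp only [riemannSum, append, h]
  ring

lemma riemannSum_single (f G : K → ℝ) {τ : K} (ha : a ≤ τ) (hb : τ ≤ b) :
    riemannSum f G (single a b τ ha hb) = f a * G a + f τ * (G b - G a) := by
  simp [riemannSum, single]

end TaggedPartition

section Cousin

variable {K : Type*} [LinearOrder K] [TopologicalSpace K] {c d : K} {δ : K → Set K}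

lemma isGauge_const_Icc (c d : K) : IsGauge K c d (fun _ => Icc c d) :=
  fun _ hx => ⟨hx, ordConnected_Icc, univ, isOpen_univ, (univ_inter _).symm⟩

lemma IsGauge.inter [BoundedOrder K] {δ₂ : K → Set K} (hδ : IsGauge K ⊥ ⊤ δ)
    (hδ₂ : IsGauge K c d δ₂) : IsGauge K c d (fun x => δ x ∩ δ₂ x) := by
  intro x hx
  obtain ⟨hx₁, hconn₁, U, hU, hδx⟩ := hδ x ⟨bot_le, le_top⟩
  obtain ⟨hx₂, hconn₂, V, hV, hδ₂x⟩ := hδ₂ x hx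
  refine ⟨⟨hx₁, hx₂⟩, hconn₁.inter hconn₂, U ∩ V, hU.inter hV, ?_⟩
  simp only [hδx, hδ₂x, Icc_bot_top, inter_univ, inter_assoc]

variable [OrderTopology K]

/-- The cell is tagged at `u` if `u` is a right accumulation point, and is `[u, v]` tagged at
the successor `v` of `u` otherwise. -/
lemma IsGauge.exists_fine_cell_right (hδ : IsGauge K c d δ) {u : K} (hu : u ∈ Icc c d)
    (hud : u < d) : ∃ v τ, u < v ∧ v ≤ d ∧ τ ∈ Icc u v ∧ Ioc u v ⊆ δ τ := by
  obtain ⟨huδ, hconn, U, hU, hδu⟩ := hδ u hu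
  obtain ⟨w, ⟨huw, hwd⟩, hUw⟩ :=
    exists_Ico_subset_of_mem_nhds' (hU.mem_nhds (hδu ▸ huδ).1) hud
  by_cases hgap : ∃ v, u < v ∧ v < w
  · obtain ⟨v, huv, hvw⟩ := hgap
    have hvδ : v ∈ δ u := hδu ▸ ⟨hUw ⟨huv.le, hvw⟩, hu.1.trans huv.le, hvw.le.trans hwd⟩
    exact ⟨v, u, huv, hvw.le.trans hwd, ⟨le_rfl, huv.le⟩,
      Ioc_subset_Icc_self.trans (hconn.out huδ hvδ)⟩
  · push Not at hgap
    refine ⟨w, w, huw, hwd, ⟨huw.le, le_rfl⟩, fun z hz => ?_⟩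
    obtain rfl : z = w := le_antisymm hz.2 (hgap z hz.1)
    exact (hδ z ⟨hu.1.trans huw.le, hwd⟩).1

variable [CompactSpace K]

/-- Cousin's lemma. -/
theorem IsGauge.exists_isFine (hδ : IsGauge K c d δ) (hcd : c ≤ d) :
    ∃ P : TaggedPartition K c d, P.IsFine δ := by
  set S : Set K := {y | y ∈ Icc c d ∧ ∃ P : TaggedPartition K c y, P.IsFine δ}
  have extend : ∀ y ∈ S, ∀ v τ, y ≤ τ → τ ≤ v → v ≤ d → Ioc y v ⊆ δ τ → v ∈ S := by
    rintro y ⟨hy, P, hP⟩ v τ hyτ hτv hvd hfine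
    exact ⟨⟨hy.1.trans (hyτ.trans hτv), hvd⟩, P.append (.single y v τ hyτ hτv),
      hP.append (TaggedPartition.isFine_single hyτ hτv hfine)⟩
  have hcS : c ∈ S := ⟨⟨le_rfl, hcd⟩, .single c c c le_rfl le_rfl,
    TaggedPartition.isFine_single le_rfl le_rfl (by simp)⟩
  obtain ⟨u, huS, hub⟩ := isClosed_closure.isCompact.exists_isGreatest ⟨c, subset_closure hcS⟩
  have hu : u ∈ Icc c d := closure_minimal (fun y hy => hy.1) isClosed_Icc huS
  -- the supremum `u` is reached from a point `v ∈ S` lying in `δ u`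
  have hu_mem : u ∈ S := by
    obtain ⟨huδ, hconn, U, hU, hδu⟩ := hδ u hu
    obtain ⟨v, hvU, hvS⟩ := mem_closure_iff.mp huS U hU (hδu ▸ huδ).1
    have hvδ : v ∈ δ u := hδu ▸ ⟨hvU, hvS.1⟩
    exact extend v hvS u u (hub (subset_closure hvS)) le_rfl hu.2
      (Ioc_subset_Icc_self.trans (hconn.out hvδ huδ))
  obtain rfl | hud := hu.2.eq_or_lt
  · exact hu_mem.2
  obtain ⟨v, τ, huv, hvd, hτ, hfine⟩ := hδ.exists_fine_cell_right hu hud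
  exact absurd (hub (subset_closure (extend u hu_mem v τ hτ.1 hτ.2 hvd hfine))) huv.not_ge

end Cousin

section SaksHenstock

variable {K : Type*} [LinearOrder K] {f G : K → ℝ} {δ : K → Set K}

def IsFineRiemannSum (f G : K → ℝ) (δ : K → Set K) (c d : K) (r : ℝ) : Prop :=
  ∃ P : TaggedPartition K c d, P.IsFine δ ∧ riemannSum f G P = r

lemma IsFineRiemannSum.append {c d e : K} {r r' : ℝ} (h : IsFineRiemannSum f G δ c d r)
    (h' : IsFineRiemannSum f G δ d e r') :
    IsFineRiemannSum f G δ c e (r + r' - f d * G d) := by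
  obtain ⟨P, hP, rfl⟩ := h
  obtain ⟨Q, hQ, rfl⟩ := h'
  exact ⟨P.append Q, hP.append hQ, TaggedPartition.riemannSum_append f G P Q⟩

lemma isFineRiemannSum_single {a b τ : K} (ha : a ≤ τ) (hb : τ ≤ b) (h : Ioc a b ⊆ δ τ) :
    IsFineRiemannSum f G δ a b (f a * G a + f τ * (G b - G a)) :=
  ⟨_, TaggedPartition.isFine_single ha hb h, TaggedPartition.riemannSum_single f G ha hb⟩

variable [TopologicalSpace K] [OrderTopology K] [CompactSpace K] [BoundedOrder K]

lemma IsGauge.exists_isFineRiemannSum (hδ : IsGauge K ⊥ ⊤ δ) {c d : K} (hcd : c ≤ d) :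
    ∃ r, IsFineRiemannSum f G δ c d r := by
  obtain ⟨P, hP⟩ := (hδ.inter (isGauge_const_Icc c d)).exists_isFine hcd
  exact ⟨_, P, hP.mono fun _ => inter_subset_left, rfl⟩

lemma HasIntegral.exists_isFineRiemannSum_near {a b : K} {I η : ℝ} (hI : HasIntegral f G a b I)
    (hδ : IsGauge K ⊥ ⊤ δ) (hab : a ≤ b) (hη : 0 < η) :
    ∃ ρ, IsFineRiemannSum f G δ a b ρ ∧ |ρ - I| < η := by
  obtain ⟨δ₂, hδ₂, hclose⟩ := hI η hη
  obtain ⟨P, hP⟩ := (hδ.inter hδ₂).exists_isFine hab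
  exact ⟨_, ⟨P, hP.mono fun _ => inter_subset_left, rfl⟩,
    hclose P (hP.mono fun _ => inter_subset_right)⟩

/-- The gaps between the intervals of the system are filled by the same fine partitions on
both sides. -/
theorem IsGauge.exists_isFineRiemannSum_sub_eq_sum (hδ : IsGauge K ⊥ ⊤ δ) (s : Finset ℕ)
    (a b : ℕ → K) (r r' : ℕ → ℝ) (hord : ∀ i ∈ s, ∀ j ∈ s, i < j → b i ≤ a j)
    (hr : ∀ k ∈ s, IsFineRiemannSum f G δ (a k) (b k) (r k))
    (hr' : ∀ k ∈ s, IsFineRiemannSum f G δ (a k) (b k) (r' k)) {d : K} (hd : ∀ k ∈ s, b k ≤ d) :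
    ∃ p p', IsFineRiemannSum f G δ ⊥ d p ∧ IsFineRiemannSum f G δ ⊥ d p' ∧
      p - p' = ∑ k ∈ s, (r k - r' k) := by
  induction s using Finset.induction_on_max generalizing d with
  | empty =>
    obtain ⟨p, hp⟩ := hδ.exists_isFineRiemannSum (f := f) (G := G) (bot_le : ⊥ ≤ d)
    exact ⟨p, p, hp, hp, by simp⟩
  | insert j s hlt ih =>
    obtain ⟨p, p', hp, hp', hpp'⟩ := ih (fun i hi k hk => hord i (by simp [hi]) k (by simp [hk]))
      (fun k hk => hr k (by simp [hk])) (fun k hk => hr' k (by simp [hk]))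
      (fun k hk => hord k (by simp [hk]) j (by simp) (hlt k hk))
    obtain ⟨g, hg⟩ := hδ.exists_isFineRiemannSum (f := f) (G := G) (hd j (by simp))
    refine ⟨_, _, (hp.append (hr j (by simp))).append hg, (hp'.append (hr' j (by simp))).append hg,
      ?_⟩
    rw [Finset.sum_insert fun hj => (hlt j hj).false, ← hpp']
    ring

variable (f G)

/-- The signed Saks–Henstock lemma. -/
theorem abs_sum_sub_integral_le_of_isGauge {A ε : ℝ} (hδ : IsGauge K ⊥ ⊤ δ)
    (hδε : ∀ P : TaggedPartition K ⊥ ⊤, P.IsFine δ → |riemannSum f G P - A| < ε)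
    (s : Finset ℕ) (a b t : ℕ → K) (hmem : ∀ k ∈ s, a k ≤ t k ∧ t k ≤ b k)
    (hord : ∀ i ∈ s, ∀ j ∈ s, i < j → b i ≤ a j) (hfine : ∀ k ∈ s, Ioc (a k) (b k) ⊆ δ (t k))
    (ι : ℕ → ℝ) (hι : ∀ k ∈ s, HasIntegral f G (a k) (b k) (ι k)) :
    |∑ k ∈ s, (f (t k) * (G (b k) - G (a k)) + f (a k) * G (a k) - ι k)| ≤ 2 * ε := by
  refine le_of_forall_pos_lt_add fun ε' hε' => ?_
  -- `+ 1` keeps `η` positive when `s = ∅`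
  set η := ε' / (s.card + 1)
  have hnear : ∀ k, ∃ ρ, k ∈ s → IsFineRiemannSum f G δ (a k) (b k) ρ ∧ |ρ - ι k| < η := by
    intro k
    by_cases hk : k ∈ s
    · obtain ⟨ρ, hρ⟩ := (hι k hk).exists_isFineRiemannSum_near (η := η) hδ
        ((hmem k hk).1.trans (hmem k hk).2) (by positivity)
      exact ⟨ρ, fun _ => hρ⟩
    · exact ⟨0, fun h => absurd h hk⟩
  choose ρ hρ using hnear
  obtain ⟨p, p', ⟨P, hP, rfl⟩, ⟨P', hP', rfl⟩, hpp'⟩ := hδ.exists_isFineRiemannSum_sub_eq_sum s a b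
    (fun k => f (a k) * G (a k) + f (t k) * (G (b k) - G (a k))) ρ hord
    (fun k hk => isFineRiemannSum_single (hmem k hk).1 (hmem k hk).2 (hfine k hk))
    (fun k hk => (hρ k hk).1) fun _ _ => le_top
  have hsplit : ∑ k ∈ s, (f (t k) * (G (b k) - G (a k)) + f (a k) * G (a k) - ι k) =
      (riemannSum f G P - riemannSum f G P') + ∑ k ∈ s, (ρ k - ι k) := by
    rw [hpp', ← Finset.sum_add_distrib]
    exact Finset.sum_congr rfl fun k _ => by ring
  have hfull : |riemannSum f G P - riemannSum f G P'| < 2 * ε := by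
    have := abs_sub_le (riemannSum f G P) A (riemannSum f G P')
    rw [abs_sub_comm A] at this
    linarith [hδε P hP, hδε P' hP']
  have hsystem : |∑ k ∈ s, (ρ k - ι k)| ≤ ε' :=
    calc |∑ k ∈ s, (ρ k - ι k)| ≤ ∑ k ∈ s, |ρ k - ι k| := Finset.abs_sum_le_sum_abs _ _
      _ ≤ ∑ _k ∈ s, η := Finset.sum_le_sum fun k hk => (hρ k hk).2.le
      _ = s.card / (s.card + 1) * ε' := by rw [Finset.sum_const, nsmul_eq_mul]; ring
      _ ≤ ε' := mul_le_of_le_one_left hε'.le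
          ((div_le_one (by positivity)).mpr (by linarith))
  rw [hsplit]
  linarith [abs_add_le (riemannSum f G P - riemannSum f G P') (∑ k ∈ s, (ρ k - ι k))]

end SaksHenstock

lemma Finset.sum_abs_le_two_mul_of_forall_subset {ι : Type*} {s : Finset ι} {T : ι → ℝ} {C : ℝ}
    (h : ∀ u ⊆ s, |∑ k ∈ u, T k| ≤ C) : ∑ k ∈ s, |T k| ≤ 2 * C := by
  classical
  rw [← Finset.sum_filter_add_sum_filter_not s fun k => 0 ≤ T k]
  have hpos : ∑ k ∈ s with 0 ≤ T k, |T k| = ∑ k ∈ s with 0 ≤ T k, T k :=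
    Finset.sum_congr rfl fun k hk => abs_of_nonneg (Finset.mem_filter.mp hk).2
  have hneg : ∑ k ∈ s with ¬0 ≤ T k, |T k| = -∑ k ∈ s with ¬0 ≤ T k, T k := by
    rw [← Finset.sum_neg_distrib]
    exact Finset.sum_congr rfl fun k hk => abs_of_neg (not_le.mp (Finset.mem_filter.mp hk).2)
  rw [hpos, hneg]
  linarith [le_abs_self (∑ k ∈ s with 0 ≤ T k, T k), neg_le_abs (∑ k ∈ s with ¬0 ≤ T k, T k),
    h _ (Finset.filter_subset (fun k => 0 ≤ T k) s),
    h _ (Finset.filter_subset (fun k => ¬0 ≤ T k) s)]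

lemma le_of_consecutive_le {K : Type*} [Preorder K] {m : ℕ} {a b : ℕ → K}
    (hab : ∀ k < m, a k ≤ b k) (hord : ∀ k, k + 1 < m → b k ≤ a (k + 1)) {i j : ℕ} (hij : i < j)
    (hj : j < m) : b i ≤ a j := by
  induction j, hij using Nat.le_induction with
  | base => exact hord i hj
  | succ j hij ih => exact (ih (by omega)).trans ((hab j (by omega)).trans (hord j hj))

theorem saks_henstock_abs_general {K : Type*} [LinearOrder K] [TopologicalSpace K] [OrderTopology K]
    [CompactSpace K] [BoundedOrder K] (f G : K → ℝ)
    (A : ℝ) (ε : ℝ)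
    (δ : K → Set K) (hδ : IsGauge K ⊥ ⊤ δ)
    (hδε : ∀ P : TaggedPartition K (⊥ : K) (⊤ : K), P.IsFine δ → |riemannSum f G P - A| < ε)
    (m : ℕ) (a b t : ℕ → K)
    (hmem : ∀ k < m, a k ≤ t k ∧ t k ≤ b k)
    (hord : ∀ k, k + 1 < m → b k ≤ a (k + 1))
    (hfine : ∀ k < m, Set.Ioc (a k) (b k) ⊆ δ (t k))
    (ι : ℕ → ℝ) (hι : ∀ k < m, HasIntegral f G (a k) (b k) (ι k)) :
    ∑ k ∈ Finset.range m, |f (t k) * (G (b k) - G (a k)) + f (a k) * G (a k) - ι k|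
      ≤ 4 * ε := by
  have hchain : ∀ i j, i < j → j < m → b i ≤ a j := fun i j hij hj =>
    le_of_consecutive_le (fun k hk => (hmem k hk).1.trans (hmem k hk).2) hord hij hj
  have hsub : ∀ u ⊆ Finset.range m,
      |∑ k ∈ u, (f (t k) * (G (b k) - G (a k)) + f (a k) * G (a k) - ι k)| ≤ 2 * ε := by
    intro u hu
    replace hu : ∀ k ∈ u, k < m := fun k hk => Finset.mem_range.mp (hu hk)
    exact abs_sum_sub_integral_le_of_isGauge f G hδ hδε u a b t (fun k hk => hmem k (hu k hk))
      (fun i _ j hj hij => hchain i j hij (hu j hj)) (fun k hk => hfine k (hu k hk)) ι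
      fun k hk => hι k (hu k hk)
  calc ∑ k ∈ Finset.range m, |f (t k) * (G (b k) - G (a k)) + f (a k) * G (a k) - ι k|
      ≤ 2 * (2 * ε) := Finset.sum_abs_le_two_mul_of_forall_subset hsub
    _ = 4 * ε := by ring

theorem saks_henstock_abs {K : Type*} [LinearOrder K] [TopologicalSpace K] [OrderTopology K]
    [CompactSpace K] [BoundedOrder K] (f G : K → ℝ) (hG : Amenable G)
    (A : ℝ) (hf : HasIntegral f G (⊥ : K) ⊤ A) (ε : ℝ) (hε : 0 < ε)
    (δ : K → Set K) (hδ : IsGauge K ⊥ ⊤ δ)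
    (hδε : ∀ P : TaggedPartition K (⊥ : K) (⊤ : K), P.IsFine δ → |riemannSum f G P - A| < ε)
    (m : ℕ) (a b t : ℕ → K)
    (hmem : ∀ k < m, a k ≤ t k ∧ t k ≤ b k)
    (hord : ∀ k, k + 1 < m → b k ≤ a (k + 1))
    (hfine : ∀ k < m, Set.Ioc (a k) (b k) ⊆ δ (t k))
    (ι : ℕ → ℝ) (hι : ∀ k < m, HasIntegral f G (a k) (b k) (ι k)) :
    ∑ k ∈ Finset.range m, |f (t k) * (G (b k) - G (a k)) + f (a k) * G (a k) - ι k|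
      ≤ 4 * ε :=
  saks_henstock_abs_general f G A ε δ hδ hδε m a b t hmem hord hfine ι hι
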